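/- For an ℝ-linear bijection α of the exceptional Jordan algebra 𝔍, the following are equivalent: (1) α preserves the Jordan product; (2) α preserves det and the inner product; (3) α preserves det and fixes E; (4) α preserves the Freudenthal cross product ×. -/

import Mathlib

/-!
The real octonion (Cayley) algebra `𝕆`, realized via the Cayley–Dickson
construction on the real quaternions: elements are pairs of quaternions with
multiplication `(a,b)(c,d) = (ac − d̄b, da + bc̄)`.
-/

noncomputable section

def Octonion : Type := Quaternion ℝ × Quaternion ℝ

instance : AddCommGroup Octonion :=
  inferInstanceAs (AddCommGroup (Quaternion ℝ × Quaternion ℝ))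

instance : Module ℝ Octonion :=
  inferInstanceAs (Module ℝ (Quaternion ℝ × Quaternion ℝ))

/-- Cayley–Dickson multiplication. -/
instance : Mul Octonion :=
  ⟨fun x y => ((x.1 * y.1 - star y.2 * x.2, y.2 * x.1 + x.2 * star y.1) :
      Quaternion ℝ × Quaternion ℝ)⟩

instance : One Octonion := ⟨((1, 0) : Quaternion ℝ × Quaternion ℝ)⟩

/-- Octonion conjugation `x ↦ x̄`. -/
def oconj (x : Octonion) : Octonion := ((star x.1, -x.2) : Quaternion ℝ × Quaternion ℝ)

/-- The real part `R(x)` of an octonion (the coefficient of `1`). -/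
def ore (x : Octonion) : ℝ := x.1.re

/-- The standard (positive definite) inner product `(x, y)` on the octonions;
it satisfies `(x,y)·1 = ½(x̄y + ȳx)`. -/
def oinner (x y : Octonion) : ℝ := (x.1 * star y.1).re + (x.2 * star y.2).re

/-- The norm `|x| = √(x,x)` of an octonion. -/
def onorm (x : Octonion) : ℝ := Real.sqrt (oinner x x)

/-!
The exceptional Jordan algebra `𝔍 = J(3, 𝕆)`: `3×3` octonionic Hermitian
matrices, with Jordan product `X∘Y = ½(XY + YX)`, trace, inner product
`(X,Y) = tr(X∘Y)`, Freudenthal cross product, trilinear form and determinant.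
-/

/-- `3×3` matrices over the octonions. -/
abbrev JMat : Type := Matrix (Fin 3) (Fin 3) Octonion

/-- The Hermitian condition `X* = X` (octonionic conjugate transpose);
`𝔍 = {X | JHerm X}`. -/
def JHerm (X : JMat) : Prop := ∀ i j, oconj (X j i) = X i j

/-- The trace `tr(X) = ξ₁ + ξ₂ + ξ₃` (for Hermitian `X` the diagonal entries
are real). -/
def jtr (X : JMat) : ℝ := ore (X 0 0) + ore (X 1 1) + ore (X 2 2)

/-- The Jordan multiplication `X∘Y = ½(XY + YX)`. -/
def jmul (X Y : JMat) : JMat := (2⁻¹ : ℝ) • (X * Y + Y * X)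

/-- The inner product `(X, Y) = tr(X∘Y)`. -/
def jinner (X Y : JMat) : ℝ := jtr (jmul X Y)

/-- The Freudenthal cross product
`X×Y = X∘Y − ½(tr(X)Y + tr(Y)X) + ½(tr(X)tr(Y) − (X,Y))E`. -/
def jcross (X Y : JMat) : JMat :=
  jmul X Y - (2⁻¹ : ℝ) • (jtr X • Y + jtr Y • X)
    + ((2⁻¹ : ℝ) * (jtr X * jtr Y - jinner X Y)) • (1 : JMat)

/-- The trilinear form `(X, Y, Z) = (X, Y×Z)`. -/
def jtri (X Y Z : JMat) : ℝ := jinner X (jcross Y Z)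

/-- The determinant `det X = ⅓(X, X, X)`. -/
def jdet (X : JMat) : ℝ := (3⁻¹ : ℝ) * jtri X X X


/-!
A Jordan automorphism fixes `E`, and `X ↦ tr (α X)` is an associative trace form; evaluating
associativity on the idempotents `E_i` and the off-diagonal elements `F_{pq}(x)` shows that it
is `tr`, so `α` preserves `(·,·)`. Since `×`, `∘`, `tr` and `(·,·)` are expressed through each
other and `E`, preserving `∘` or `×` is then the same thing.

Conversely, if `α` preserves `×`, put `B = α E` and `α C = E`. The symmetry of `(X, Y × Z)` gives
`(α X, α Y) = (B, B) / 3 · (X, Y)`, and taking traces in `α (X × Y) = α X × α Y` yields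
`6 (C, X × Y) = (B, B) (C, X) (C, Y) - 3 (X, Y)`. On `X = Y = F_{pq}(x)` this makes a multiple of
`|x|²` the square of a linear form in `x`, so the multiple vanishes: `(C, E_k) = 1`. Then
`(B, B) = 3` and `C = E`.

Finally `det` determines the trilinear form `(X, Y × Z)` by polarization; with `E` fixed this
gives `tr` and `(·,·)`, and since `(·,·)` is positive definite, also `×`.
-/

namespace Octonion

@[ext] lemma ext {x y : Octonion} (h1 : x.1 = y.1) (h2 : x.2 = y.2) : x = y := Prod.ext h1 h2

@[simp] lemma mul_fst (x y : Octonion) : (x * y).1 = x.1 * y.1 - star y.2 * x.2 := rfl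
@[simp] lemma mul_snd (x y : Octonion) : (x * y).2 = y.2 * x.1 + x.2 * star y.1 := rfl
@[simp] lemma add_fst (x y : Octonion) : (x + y).1 = x.1 + y.1 := rfl
@[simp] lemma add_snd (x y : Octonion) : (x + y).2 = x.2 + y.2 := rfl
@[simp] lemma smul_fst (r : ℝ) (x : Octonion) : (r • x).1 = r • x.1 := rfl
@[simp] lemma smul_snd (r : ℝ) (x : Octonion) : (r • x).2 = r • x.2 := rfl
@[simp] lemma zero_fst : (0 : Octonion).1 = 0 := rfl
@[simp] lemma zero_snd : (0 : Octonion).2 = 0 := rfl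
@[simp] lemma one_fst : (1 : Octonion).1 = 1 := rfl
@[simp] lemma one_snd : (1 : Octonion).2 = 0 := rfl
@[simp] lemma oconj_fst (x : Octonion) : (oconj x).1 = star x.1 := rfl
@[simp] lemma oconj_snd (x : Octonion) : (oconj x).2 = -x.2 := rfl

end Octonion

section

-- Local, so that outside this section `+`, `0`, `1` on `Octonion` and `JMat` elaborate through
-- the instances of the definitions above.
local instance : NonAssocRing Octonion :=
  { (inferInstance : AddCommGroup Octonion) with
    mul := (· * ·)
    one := 1
    left_distrib _ _ _ := Octonion.ext
      (by simp only [Octonion.mul_fst, Octonion.add_fst, Octonion.add_snd, mul_add, add_mul,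
        star_add]; abel)
      (by simp only [Octonion.mul_snd, Octonion.add_fst, Octonion.add_snd, mul_add, add_mul,
        star_add]; abel)
    right_distrib _ _ _ := Octonion.ext
      (by simp only [Octonion.mul_fst, Octonion.add_fst, Octonion.add_snd, add_mul, mul_add]; abel)
      (by simp only [Octonion.mul_snd, Octonion.add_fst, Octonion.add_snd, add_mul, mul_add]; abel)
    zero_mul := fun _ => Octonion.ext (by simp) (by simp)
    mul_zero := fun _ => Octonion.ext (by simp) (by simp)
    one_mul := fun _ => Octonion.ext (by simp) (by simp)
    mul_one := fun _ => Octonion.ext (by simp) (by simp) }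

local instance : IsScalarTower ℝ Octonion Octonion :=
  ⟨fun _ _ _ => Octonion.ext (by simp [smul_sub]) (by simp)⟩

local instance : SMulCommClass ℝ Octonion Octonion :=
  ⟨fun _ _ _ => Octonion.ext (by simp [smul_sub]) (by simp)⟩

local instance : StarRing Octonion where
  star := oconj
  star_involutive _ := Octonion.ext (by simp) (by simp)
  star_mul _ _ := Octonion.ext (by simp) (by simp)
  star_add _ _ :=
    Octonion.ext (by simp) (by simp only [Octonion.oconj_snd, Octonion.add_snd]; abel)

local instance : StarModule ℝ Octonion :=
  ⟨fun r x => show oconj (r • x) = r • oconj x from Octonion.ext (by simp) (by simp)⟩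

namespace Octonion

lemma star_eq_oconj (x : Octonion) : star x = oconj x := rfl
@[simp] lemma star_fst (x : Octonion) : (star x).1 = star x.1 := rfl
@[simp] lemma star_snd (x : Octonion) : (star x).2 = -x.2 := rfl

@[simp] lemma ore_add (x y : Octonion) : ore (x + y) = ore x + ore y := rfl
@[simp] lemma ore_smul (r : ℝ) (x : Octonion) : ore (r • x) = r * ore x := rfl
@[simp] lemma ore_sub (x y : Octonion) : ore (x - y) = ore x - ore y := rfl
@[simp] lemma ore_zero : ore 0 = 0 := rfl
@[simp] lemma ore_one : ore 1 = 1 := rfl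

lemma ore_mul_comm (x y : Octonion) : ore (x * y) = ore (y * x) := by
  simp only [ore, mul_fst, Quaternion.re_sub, Quaternion.re_mul, Quaternion.re_star,
    Quaternion.imI_star, Quaternion.imJ_star, Quaternion.imK_star]
  ring

lemma ore_mul_assoc (x y z : Octonion) : ore (x * y * z) = ore (x * (y * z)) := by
  simp only [ore, mul_fst, mul_snd, star_add, star_mul, star_star, Quaternion.re_add,
    Quaternion.re_sub, Quaternion.re_mul, Quaternion.re_star, Quaternion.imI_add,
    Quaternion.imI_sub, Quaternion.imI_mul, Quaternion.imI_star, Quaternion.imJ_add,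
    Quaternion.imJ_sub, Quaternion.imJ_mul, Quaternion.imJ_star, Quaternion.imK_add,
    Quaternion.imK_sub, Quaternion.imK_mul, Quaternion.imK_star]
  ring

lemma oinner_self (x : Octonion) : oinner x x =
    x.1.re ^ 2 + x.1.imI ^ 2 + x.1.imJ ^ 2 + x.1.imK ^ 2 +
      (x.2.re ^ 2 + x.2.imI ^ 2 + x.2.imJ ^ 2 + x.2.imK ^ 2) := by
  simp only [oinner, Quaternion.re_mul, Quaternion.re_star, Quaternion.imI_star,
    Quaternion.imJ_star, Quaternion.imK_star]
  ring

lemma oinner_star_self (x : Octonion) : oinner (star x) (star x) = oinner x x := by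
  simp [oinner]

lemma oinner_self_nonneg (x : Octonion) : 0 ≤ oinner x x := by
  rw [oinner_self]; positivity

lemma eq_zero_of_oinner_self_eq_zero {x : Octonion} (h : oinner x x = 0) : x = 0 := by
  rw [oinner_self] at h
  ext <;> simp only [zero_fst, zero_snd, Quaternion.re_zero, Quaternion.imI_zero,
    Quaternion.imJ_zero, Quaternion.imK_zero] <;> nlinarith

lemma mul_star_self (x : Octonion) : x * star x = oinner x x • 1 := by
  ext <;> simp only [oinner, mul_fst, mul_snd, star_fst, star_snd, star_neg, star_star,
    smul_fst, smul_snd, one_fst, one_snd, smul_eq_mul, smul_zero,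
    Quaternion.re_add, Quaternion.re_sub, Quaternion.re_neg, Quaternion.re_mul,
    Quaternion.re_star, Quaternion.re_smul, Quaternion.re_zero, Quaternion.re_one,
    Quaternion.imI_add, Quaternion.imI_sub, Quaternion.imI_neg, Quaternion.imI_mul,
    Quaternion.imI_star, Quaternion.imI_smul, Quaternion.imI_zero, Quaternion.imI_one,
    Quaternion.imJ_add, Quaternion.imJ_sub, Quaternion.imJ_neg, Quaternion.imJ_mul,
    Quaternion.imJ_star, Quaternion.imJ_smul, Quaternion.imJ_zero, Quaternion.imJ_one,
    Quaternion.imK_add, Quaternion.imK_sub, Quaternion.imK_neg, Quaternion.imK_mul,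
    Quaternion.imK_star, Quaternion.imK_smul, Quaternion.imK_zero, Quaternion.imK_one] <;> ring

lemma star_mul_self (x : Octonion) : star x * x = oinner x x • 1 := by
  have h := mul_star_self (star x)
  rw [star_star] at h
  rw [h]
  congr 1
  simp [oinner]

lemma ore_mul_star_self (x : Octonion) : ore (x * star x) = oinner x x := by
  simp [mul_star_self]

lemma ore_star_mul_self (x : Octonion) : ore (star x * x) = oinner x x := by
  simp [star_mul_self]

lemma eq_ore_smul_one_of_star_eq {x : Octonion} (h : star x = x) : x = ore x • 1 := by
  have h1 : star x.1 = x.1 := congrArg Prod.fst h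
  have h2 : -x.2 = x.2 := congrArg Prod.snd h
  have hI := congrArg QuaternionAlgebra.imI h1
  have hJ := congrArg QuaternionAlgebra.imJ h1
  have hK := congrArg QuaternionAlgebra.imK h1
  simp only [Quaternion.imI_star, Quaternion.imJ_star, Quaternion.imK_star] at hI hJ hK
  have h2' : x.2 = 0 := by
    have h3 : (2 : ℝ) • x.2 = 0 := by rw [two_smul]; nth_rw 1 [← h2]; exact neg_add_cancel _
    simpa using h3
  ext <;> simp only [ore, h2', smul_fst, smul_snd, one_fst, one_snd, smul_eq_mul, mul_one,
    mul_zero, smul_zero, Quaternion.re_smul, Quaternion.imI_smul, Quaternion.imJ_smul,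
    Quaternion.imK_smul, Quaternion.re_one, Quaternion.imI_one, Quaternion.imJ_one,
    Quaternion.imK_one] <;> linarith

lemma oinner_one : oinner 1 1 = 1 := by
  simp [oinner, Quaternion.re_one, Quaternion.re_zero]

/-- Evaluate at the orthonormal pair `1`, `ℓ = (0, 1)` and at `1 + ℓ`. -/
lemma eq_zero_of_mul_sq_eq_smul_oinner {f : Octonion → ℝ} (hf : ∀ x y, f (x + y) = f x + f y)
    {a b : ℝ} (h : ∀ x, a * f x ^ 2 = b * oinner x x) : b = 0 := by
  obtain ⟨ℓ, hℓ1, hℓ2⟩ : ∃ ℓ : Octonion, ℓ.1 = 0 ∧ ℓ.2 = 1 := ⟨(0, 1), rfl, rfl⟩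
  have h1 := h 1
  have hℓ := h ℓ
  have h1ℓ := h (1 + ℓ)
  rw [hf] at h1ℓ
  simp only [oinner_self, add_fst, add_snd, one_fst, one_snd, hℓ1, hℓ2, add_zero, zero_add,
    Quaternion.re_one, Quaternion.imI_one, Quaternion.imJ_one, Quaternion.imK_one,
    Quaternion.re_zero, Quaternion.imI_zero, Quaternion.imJ_zero, Quaternion.imK_zero]
    at h1 hℓ h1ℓ
  norm_num at h1 hℓ h1ℓ
  have hcross : a * f 1 * f ℓ = 0 := by linear_combination (h1ℓ - h1 - hℓ) / 2
  have hb : b ^ 2 = 0 := by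
    linear_combination (a * f 1 * f ℓ) * hcross - (a * f ℓ ^ 2) * h1 - b * hℓ
  exact pow_eq_zero_iff two_ne_zero |>.mp hb

end Octonion

open Octonion

lemma JMat.mul_apply (A B : JMat) (i j : Fin 3) :
    (A * B) i j = A i 0 * B 0 j + A i 1 * B 1 j + A i 2 * B 2 j := by
  rw [Matrix.mul_apply, Fin.sum_univ_three]

lemma jtr_add (A B : JMat) : jtr (A + B) = jtr A + jtr B := by
  simp only [jtr, Matrix.add_apply, ore_add]; ring
lemma jtr_sub (A B : JMat) : jtr (A - B) = jtr A - jtr B := by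
  simp only [jtr, Matrix.sub_apply, ore_sub]; ring
lemma jtr_smul (r : ℝ) (A : JMat) : jtr (r • A) = r * jtr A := by
  simp only [jtr, Matrix.smul_apply, ore_smul]; ring
lemma jtr_one : jtr (1 : JMat) = 3 := by norm_num [jtr, Matrix.one_apply]

lemma jtr_mul_comm (A B : JMat) : jtr (A * B) = jtr (B * A) := by
  simp only [jtr, JMat.mul_apply, ore_add, ore_mul_comm (A _ _)]
  ring

lemma jtr_mul_assoc (A B C : JMat) : jtr (A * B * C) = jtr (A * (B * C)) := by
  simp only [jtr, JMat.mul_apply, ore_add, add_mul, mul_add, ore_mul_assoc]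
  ring

lemma jmul_comm (X Y : JMat) : jmul X Y = jmul Y X := by
  rw [jmul, jmul, add_comm]
lemma jmul_add_right (X U V : JMat) : jmul X (U + V) = jmul X U + jmul X V := by
  simp only [jmul, Matrix.mul_add, Matrix.add_mul]; module
lemma jmul_add_left (U V X : JMat) : jmul (U + V) X = jmul U X + jmul V X := by
  rw [jmul_comm, jmul_add_right, jmul_comm X, jmul_comm X]
lemma jmul_smul_right (r : ℝ) (X U : JMat) : jmul X (r • U) = r • jmul X U := by
  simp only [jmul, Matrix.mul_smul, Matrix.smul_mul]; module
lemma jmul_sub_right (X U V : JMat) : jmul X (U - V) = jmul X U - jmul X V := by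
  simp only [jmul, Matrix.mul_sub, Matrix.sub_mul]; module
lemma jmul_one_right (X : JMat) : jmul X 1 = X := by
  simp only [jmul, Matrix.mul_one, Matrix.one_mul]; module
lemma jmul_one_left (X : JMat) : jmul 1 X = X := by
  rw [jmul_comm, jmul_one_right]
lemma jmul_self (X : JMat) : jmul X X = X * X := by
  rw [jmul]; module

lemma jinner_eq_jtr_mul (X Y : JMat) : jinner X Y = jtr (X * Y) := by
  rw [jinner, jmul, jtr_smul, jtr_add, jtr_mul_comm Y]; ring

lemma jinner_comm (X Y : JMat) : jinner X Y = jinner Y X := by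
  rw [jinner, jinner, jmul_comm]
lemma jinner_add_right (X U V : JMat) : jinner X (U + V) = jinner X U + jinner X V := by
  rw [jinner, jmul_add_right, jtr_add]; rfl
lemma jinner_add_left (U V X : JMat) : jinner (U + V) X = jinner U X + jinner V X := by
  rw [jinner_comm, jinner_add_right, jinner_comm X, jinner_comm X]
lemma jinner_smul_right (r : ℝ) (X U : JMat) : jinner X (r • U) = r * jinner X U := by
  rw [jinner, jmul_smul_right, jtr_smul]; rfl
lemma jinner_smul_left (r : ℝ) (X U : JMat) : jinner (r • X) U = r * jinner X U := by
  rw [jinner_comm, jinner_smul_right, jinner_comm]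
lemma jinner_sub_right (X U V : JMat) : jinner X (U - V) = jinner X U - jinner X V := by
  rw [jinner, jmul_sub_right, jtr_sub]; rfl
lemma jinner_sub_left (U V X : JMat) : jinner (U - V) X = jinner U X - jinner V X := by
  rw [jinner_comm, jinner_sub_right, jinner_comm X, jinner_comm X]
lemma jinner_zero_right (X : JMat) : jinner X 0 = 0 := by
  simpa using jinner_smul_right 0 X 0
lemma jinner_one_right (X : JMat) : jinner X 1 = jtr X := by
  rw [jinner, jmul_one_right]
lemma jinner_one_left (X : JMat) : jinner 1 X = jtr X := by
  rw [jinner_comm, jinner_one_right]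

lemma jinner_jmul_assoc (X Y Z : JMat) : jinner (jmul X Y) Z = jinner X (jmul Y Z) := by
  simp only [jinner_eq_jtr_mul, jmul, Matrix.smul_mul, Matrix.mul_smul, Matrix.add_mul,
    Matrix.mul_add, jtr_smul, jtr_add, jtr_mul_assoc]
  rw [jtr_mul_comm Y, jtr_mul_assoc]

lemma jcross_comm (X Y : JMat) : jcross X Y = jcross Y X := by
  rw [jcross, jcross, jmul_comm, jinner_comm, add_comm (jtr X • Y), mul_comm (jtr X)]

lemma jtri_eq (X Y Z : JMat) : jtri X Y Z =
    jinner X (jmul Y Z) - 2⁻¹ * (jtr Y * jinner X Z) - 2⁻¹ * (jtr Z * jinner X Y)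
      + 2⁻¹ * (jtr Y * jtr Z - jinner Y Z) * jtr X := by
  rw [jtri, jcross, jinner_add_right, jinner_sub_right, jinner_smul_right, jinner_add_right,
    jinner_smul_right, jinner_smul_right, jinner_smul_right, jinner_one_right]
  ring

lemma jtri_comm23 (X Y Z : JMat) : jtri X Y Z = jtri X Z Y := by
  rw [jtri, jcross_comm]; rfl

lemma jtri_comm12 (X Y Z : JMat) : jtri X Y Z = jtri Y X Z := by
  rw [jtri_eq, jtri_eq, ← jinner_jmul_assoc, jmul_comm X, jinner_jmul_assoc,
    jinner_comm X Z, jinner_comm X Y, jinner_comm Y Z]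
  ring

lemma jtri_comm13 (X Y Z : JMat) : jtri X Y Z = jtri Z Y X := by
  rw [jtri_comm12, jtri_comm23, jtri_comm12]

lemma jtri_add_left (X X' Y Z : JMat) : jtri (X + X') Y Z = jtri X Y Z + jtri X' Y Z :=
  jinner_add_left _ _ _
lemma jtri_smul_left (r : ℝ) (X Y Z : JMat) : jtri (r • X) Y Z = r * jtri X Y Z :=
  jinner_smul_left _ _ _
lemma jtri_add_mid (X Y Y' Z : JMat) : jtri X (Y + Y') Z = jtri X Y Z + jtri X Y' Z := by
  rw [jtri_comm12, jtri_add_left, jtri_comm12, jtri_comm12 Y']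
lemma jtri_add_right (X Y Z Z' : JMat) : jtri X Y (Z + Z') = jtri X Y Z + jtri X Y Z' := by
  rw [jtri_comm13, jtri_add_left, jtri_comm13, jtri_comm13 Z']
lemma jtri_smul_mid (r : ℝ) (X Y Z : JMat) : jtri X (r • Y) Z = r * jtri X Y Z := by
  rw [jtri_comm12, jtri_smul_left, jtri_comm12]
lemma jtri_smul_right (r : ℝ) (X Y Z : JMat) : jtri X Y (r • Z) = r * jtri X Y Z := by
  rw [jtri_comm13, jtri_smul_left, jtri_comm13]

lemma jcross_one_left (X : JMat) : jcross 1 X = (-2⁻¹ : ℝ) • X + (2⁻¹ * jtr X) • 1 := by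
  rw [jcross, jmul_one_left, jtr_one, jinner_one_left]
  module

lemma jtr_jcross (X Y : JMat) : jtr (jcross X Y) = 2⁻¹ * (jtr X * jtr Y - jinner X Y) := by
  have h := jtri_eq 1 X Y
  rw [jtri, jinner_one_left, jinner_one_left, jinner_one_left, jinner_one_left, jtr_one] at h
  rw [h, jinner]
  ring

lemma jtri_one_right (X Y : JMat) : jtri X Y 1 = 2⁻¹ * (jtr X * jtr Y) - 2⁻¹ * jinner X Y := by
  rw [jtri, jcross_comm, jcross_one_left, jinner_add_right, jinner_smul_right, jinner_smul_right,
    jinner_one_right]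
  ring

lemma jtri_one_one (X : JMat) : jtri X 1 1 = jtr X := by
  rw [jtri_one_right, jinner_one_right, jtr_one]; ring

lemma jtri_add_smul_cube (X Y : JMat) (t : ℝ) : jtri (X + t • Y) (X + t • Y) (X + t • Y) =
    jtri X X X + 3 * t * jtri X X Y + 3 * t ^ 2 * jtri Y Y X + t ^ 3 * jtri Y Y Y := by
  simp only [jtri_add_left, jtri_add_mid, jtri_add_right, jtri_smul_left, jtri_smul_mid,
    jtri_smul_right]
  rw [jtri_comm23 X Y X, jtri_comm13 Y X X, jtri_comm23 Y X Y, jtri_comm13 X Y Y]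
  ring

lemma jtri_polarization_left (X Y : JMat) : 6 * jtri X X Y =
    jtri (X + Y) (X + Y) (X + Y) - jtri (X - Y) (X - Y) (X - Y) - 2 * jtri Y Y Y := by
  have hplus := jtri_add_smul_cube X Y 1
  have hminus := jtri_add_smul_cube X Y (-1)
  rw [one_smul] at hplus
  rw [neg_one_smul, ← sub_eq_add_neg] at hminus
  rw [hplus, hminus]
  ring

lemma jtri_polarization_right (X Y Z : JMat) : 2 * jtri X Y Z =
    jtri (X + Z) (X + Z) Y - jtri X X Y - jtri Z Z Y := by
  rw [jtri_add_left, jtri_add_mid, jtri_add_mid, jtri_comm12 Z X Y, jtri_comm23 X Z Y]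
  ring

lemma jHerm_iff_isHermitian (X : JMat) : JHerm X ↔ X.IsHermitian :=
  Matrix.IsHermitian.ext_iff.symm

lemma jHerm_one : JHerm 1 := (jHerm_iff_isHermitian 1).2 Matrix.isHermitian_one

namespace JHerm

variable {X Y : JMat}

lemma add (hX : JHerm X) (hY : JHerm Y) : JHerm (X + Y) := by
  rw [jHerm_iff_isHermitian] at *; exact hX.add hY
lemma sub (hX : JHerm X) (hY : JHerm Y) : JHerm (X - Y) := by
  rw [jHerm_iff_isHermitian] at *; exact hX.sub hY
lemma smul (r : ℝ) (hX : JHerm X) : JHerm (r • X) := by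
  rw [jHerm_iff_isHermitian] at *; exact hX.smul (IsSelfAdjoint.all r)

lemma jmul (hX : JHerm X) (hY : JHerm Y) : JHerm (jmul X Y) := by
  rw [jHerm_iff_isHermitian] at *
  unfold _root_.jmul
  refine Matrix.IsHermitian.smul ?_ (IsSelfAdjoint.all _)
  rw [Matrix.IsHermitian, Matrix.conjTranspose_add, Matrix.conjTranspose_mul,
    Matrix.conjTranspose_mul, hX, hY, add_comm]

lemma jcross (hX : JHerm X) (hY : JHerm Y) : JHerm (jcross X Y) :=
  ((hX.jmul hY).sub (((hY.smul _).add (hX.smul _)).smul _)).add (jHerm_one.smul _)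

lemma star_diag (hX : JHerm X) (i : Fin 3) : star (X i i) = X i i := hX i i

end JHerm

lemma jinner_self_eq {X : JMat} (hX : JHerm X) : jinner X X =
    oinner (X 0 0) (X 0 0) + oinner (X 1 1) (X 1 1) + oinner (X 2 2) (X 2 2) +
      2 * oinner (X 0 1) (X 0 1) + 2 * oinner (X 0 2) (X 0 2) + 2 * oinner (X 1 2) (X 1 2) := by
  have hdiag : ∀ i, ore (X i i * X i i) = oinner (X i i) (X i i) := fun i => by
    rw [← ore_mul_star_self, hX.star_diag]
  rw [jinner_eq_jtr_mul]
  simp only [jtr, JMat.mul_apply, ore_add]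
  simp only [← hX 1 0, ← hX 2 0, ← hX 2 1, ← star_eq_oconj, hdiag, ore_mul_star_self,
    ore_star_mul_self]
  ring

lemma oinner_le_jinner_self {X : JMat} (hX : JHerm X) (i j : Fin 3) :
    oinner (X i j) (X i j) ≤ jinner X X := by
  have hn := fun i j => oinner_self_nonneg (X i j)
  rw [jinner_self_eq hX]
  fin_cases i <;> fin_cases j <;>
    simp only [Fin.zero_eta, Fin.mk_one, Fin.reduceFinMk, ← hX 1 0, ← hX 2 0, ← hX 2 1,
      ← star_eq_oconj, oinner_star_self] <;>
    linarith [hn 0 0, hn 0 1, hn 0 2, hn 1 1, hn 1 2, hn 2 2]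

lemma eq_zero_of_jinner_self_eq_zero {X : JMat} (hX : JHerm X) (h : jinner X X = 0) : X = 0 := by
  refine Matrix.ext fun i j => ?_
  exact eq_zero_of_oinner_self_eq_zero
    (le_antisymm (h ▸ oinner_le_jinner_self hX i j) (oinner_self_nonneg _))

-- `jE i` and `jF p q x` are the paper's `E_i` and (up to conjugating `x`) `F_k(x)`, `k ∉ {p, q}`.
def jE (i : Fin 3) : JMat := Matrix.of fun a b => if a = i ∧ b = i then 1 else 0

def jF (p q : Fin 3) (x : Octonion) : JMat :=
  Matrix.of fun a b => if a = p ∧ b = q then x else if a = q ∧ b = p then star x else 0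

lemma jE_apply (i a b : Fin 3) : jE i a b = if a = i ∧ b = i then 1 else 0 := rfl
lemma jF_apply (p q : Fin 3) (x : Octonion) (a b : Fin 3) :
    jF p q x a b = if a = p ∧ b = q then x else if a = q ∧ b = p then star x else 0 := rfl

lemma jHerm_jE (i : Fin 3) : JHerm (jE i) := by
  intro a b
  fin_cases i <;> fin_cases a <;> fin_cases b <;> simp [jE_apply, ← star_eq_oconj]

lemma jHerm_jF {p q : Fin 3} (h : p ≠ q) (x : Octonion) : JHerm (jF p q x) := by
  intro a b
  simp only [jF_apply, ← star_eq_oconj]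
  by_cases h1 : a = p ∧ b = q
  · obtain ⟨rfl, rfl⟩ := h1
    simp [h, Ne.symm h]
  · by_cases h2 : a = q ∧ b = p
    · obtain ⟨rfl, rfl⟩ := h2
      simp [h]
    · simp [h1, h2, and_comm]

lemma jF_add (p q : Fin 3) (x y : Octonion) : jF p q (x + y) = jF p q x + jF p q y := by
  refine Matrix.ext fun a b => ?_
  simp only [Matrix.add_apply, jF_apply]
  split_ifs <;> simp

lemma one_eq_jE_add : (1 : JMat) = jE 0 + jE 1 + jE 2 := by
  refine Matrix.ext fun a b => ?_
  fin_cases a <;> fin_cases b <;> simp [jE_apply]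

lemma eq_jE_add_jF {X : JMat} (hX : JHerm X) :
    X = (ore (X 0 0) • jE 0 + ore (X 1 1) • jE 1 + ore (X 2 2) • jE 2)
      + (jF 0 1 (X 0 1) + jF 0 2 (X 0 2) + jF 1 2 (X 1 2)) := by
  have hdiag := fun i => eq_ore_smul_one_of_star_eq (hX.star_diag i)
  refine Matrix.ext fun a b => ?_
  fin_cases a <;> fin_cases b <;>
    simp [jE_apply, jF_apply, ← hX 1 0, ← hX 2 0, ← hX 2 1, star_eq_oconj, ← hdiag]

lemma jtr_jE (i : Fin 3) : jtr (jE i) = 1 := by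
  fin_cases i <;> simp [jtr, jE_apply]

lemma jtr_jF {p q : Fin 3} (h : p ≠ q) (x : Octonion) : jtr (jF p q x) = 0 := by
  fin_cases p <;> fin_cases q <;> simp_all [jtr, jF_apply]

lemma jinner_jE (C : JMat) (i : Fin 3) : jinner C (jE i) = ore (C i i) := by
  rw [jinner_eq_jtr_mul]
  fin_cases i <;> simp [jtr, JMat.mul_apply, jE_apply]

lemma jinner_jE_self (i : Fin 3) : jinner (jE i) (jE i) = 1 := by
  rw [jinner_jE]; simp [jE_apply]

lemma jtr_eq_sum_jinner_jE (C : JMat) :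
    jtr C = jinner C (jE 0) + jinner C (jE 1) + jinner C (jE 2) := by
  rw [← jinner_one_right, one_eq_jE_add, jinner_add_right, jinner_add_right]

lemma jmul_jE_self (i : Fin 3) : jmul (jE i) (jE i) = jE i := by
  rw [jmul_self]
  refine Matrix.ext fun a b => ?_
  fin_cases i <;> fin_cases a <;> fin_cases b <;> simp [JMat.mul_apply, jE_apply]

lemma jmul_jE_jE {i j : Fin 3} (h : i ≠ j) : jmul (jE i) (jE j) = 0 := by
  have hmul : ∀ k l : Fin 3, k ≠ l → jE k * jE l = 0 := fun k l hkl => by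
    refine Matrix.ext fun a b => ?_
    fin_cases k <;> fin_cases l <;> fin_cases a <;> fin_cases b <;>
      simp_all [JMat.mul_apply, jE_apply]
  rw [jmul, hmul i j h, hmul j i h.symm, add_zero, smul_zero]

lemma jmul_jE_jF {p q : Fin 3} (h : p ≠ q) (x : Octonion) :
    jmul (jE p) (jF p q x) = (2⁻¹ : ℝ) • jF p q x := by
  rw [jmul]
  congr 1
  refine Matrix.ext fun a b => ?_
  fin_cases p <;> fin_cases q <;> fin_cases a <;> fin_cases b <;>
    simp_all [JMat.mul_apply, jE_apply, jF_apply]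

lemma jmul_jF_self {p q : Fin 3} (h : p ≠ q) (x : Octonion) :
    jmul (jF p q x) (jF p q x) = oinner x x • (jE p + jE q) := by
  rw [jmul_self]
  refine Matrix.ext fun a b => ?_
  fin_cases p <;> fin_cases q <;> fin_cases a <;> fin_cases b <;>
    simp_all [JMat.mul_apply, jE_apply, jF_apply, mul_star_self, star_mul_self]

lemma jinner_jF_self {p q : Fin 3} (h : p ≠ q) (x : Octonion) :
    jinner (jF p q x) (jF p q x) = 2 * oinner x x := by
  rw [jinner, jmul_jF_self h, jtr_smul, jtr_add, jtr_jE, jtr_jE]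
  ring

lemma jcross_jE_self (i : Fin 3) : jcross (jE i) (jE i) = 0 := by
  rw [jcross, jmul_jE_self, jtr_jE, jinner_jE_self]
  module

lemma jcross_jF_self {p q k : Fin 3} (hpq : p ≠ q) (hsum : (1 : JMat) = jE p + jE q + jE k)
    (x : Octonion) : jcross (jF p q x) (jF p q x) = -oinner x x • jE k := by
  rw [jcross, jmul_jF_self hpq, jtr_jF hpq, jinner_jF_self hpq, hsum]
  module

structure IsHermLinear (α : JMat → JMat) : Prop where
  map_add : ∀ X Y, JHerm X → JHerm Y → α (X + Y) = α X + α Y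
  map_smul : ∀ (r : ℝ) X, JHerm X → α (r • X) = r • α X

def PreservesJMul (α : JMat → JMat) : Prop :=
  ∀ X Y, JHerm X → JHerm Y → α (jmul X Y) = jmul (α X) (α Y)

def PreservesJInner (α : JMat → JMat) : Prop :=
  ∀ X Y, JHerm X → JHerm Y → jinner (α X) (α Y) = jinner X Y

def PreservesJDet (α : JMat → JMat) : Prop :=
  ∀ X, JHerm X → jdet (α X) = jdet X

def PreservesJCross (α : JMat → JMat) : Prop :=
  ∀ X Y, JHerm X → JHerm Y → α (jcross X Y) = jcross (α X) (α Y)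

def PreservesJTri (α : JMat → JMat) : Prop :=
  ∀ X Y Z, JHerm X → JHerm Y → JHerm Z → jtri (α X) (α Y) (α Z) = jtri X Y Z

variable {α : JMat → JMat}

namespace IsHermLinear

lemma map_sub (hα : IsHermLinear α) {X Y : JMat} (hX : JHerm X) (hY : JHerm Y) :
    α (X - Y) = α X - α Y := by
  rw [sub_eq_add_neg, ← neg_one_smul ℝ Y, hα.map_add _ _ hX (hY.smul _), hα.map_smul _ _ hY,
    neg_one_smul, sub_eq_add_neg]

lemma map_add₃ (hα : IsHermLinear α) {X Y Z : JMat} (hX : JHerm X) (hY : JHerm Y)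
    (hZ : JHerm Z) : α (X + Y + Z) = α X + α Y + α Z := by
  rw [hα.map_add _ _ (hX.add hY) hZ, hα.map_add _ _ hX hY]

lemma preservesJTri_of_preservesJDet (hα : IsHermLinear α) (hdet : PreservesJDet α) :
    PreservesJTri α := by
  have hcube : ∀ W, JHerm W → jtri (α W) (α W) (α W) = jtri W W W := fun W hW => by
    have h := hdet W hW
    rw [jdet, jdet] at h
    linarith
  have hleft : ∀ X Y, JHerm X → JHerm Y → jtri (α X) (α X) (α Y) = jtri X X Y := by
    intro X Y hX hY
    have h := jtri_polarization_left (α X) (α Y)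
    rw [← hα.map_add _ _ hX hY, ← hα.map_sub hX hY, hcube _ (hX.add hY), hcube _ (hX.sub hY),
      hcube _ hY, ← jtri_polarization_left] at h
    linarith
  intro X Y Z hX hY hZ
  have h := jtri_polarization_right (α X) (α Y) (α Z)
  rw [← hα.map_add _ _ hX hZ, hleft _ _ (hX.add hZ) hY, hleft _ _ hX hY, hleft _ _ hZ hY,
    ← jtri_polarization_right] at h
  linarith

end IsHermLinear

/-- The trilinear form determines the cross product through the nondegenerate inner product. -/
lemma preservesJCross_of_preservesJTri (hmaps : Set.MapsTo α {X | JHerm X} {X | JHerm X})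
    (hsurj : Set.SurjOn α {X | JHerm X} {X | JHerm X}) (hinner : PreservesJInner α)
    (htri : PreservesJTri α) : PreservesJCross α := by
  intro X Y hX hY
  have hD : JHerm (jcross (α X) (α Y) - α (jcross X Y)) :=
    (JHerm.jcross (hmaps hX) (hmaps hY)).sub (hmaps (hX.jcross hY))
  have horth : ∀ W, JHerm W → jinner W (jcross (α X) (α Y) - α (jcross X Y)) = 0 := by
    rintro _ hW
    obtain ⟨Z, hZ, rfl⟩ := hsurj hW
    rw [jinner_sub_right, hinner _ _ hZ (hX.jcross hY)]
    exact sub_eq_zero.2 (htri Z X Y hZ hX hY)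
  exact (sub_eq_zero.1 (eq_zero_of_jinner_self_eq_zero hD (horth _ hD))).symm

lemma jtr_map_of_preservesJTri (htri : PreservesJTri α) (h1 : α 1 = 1) {X : JMat}
    (hX : JHerm X) : jtr (α X) = jtr X := by
  have h := htri X 1 1 hX jHerm_one jHerm_one
  rwa [h1, jtri_one_one, jtri_one_one] at h

lemma preservesJInner_of_preservesJTri (htri : PreservesJTri α) (h1 : α 1 = 1) :
    PreservesJInner α := by
  intro X Y hX hY
  have h := htri X Y 1 hX hY jHerm_one
  rw [h1, jtri_one_right, jtri_one_right, jtr_map_of_preservesJTri htri h1 hX,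
    jtr_map_of_preservesJTri htri h1 hY] at h
  linarith

lemma preservesJDet_of_preservesJInner_of_preservesJCross (hinner : PreservesJInner α)
    (hc : PreservesJCross α) : PreservesJDet α := by
  intro X hX
  rw [jdet, jdet, jtri, jtri, ← hc X X hX hX, hinner _ _ hX (hX.jcross hX)]

lemma jtr_map_of_preservesJInner (hinner : PreservesJInner α) (h1 : α 1 = 1) {X : JMat}
    (hX : JHerm X) : jtr (α X) = jtr X := by
  rw [← jinner_one_right, ← h1, hinner X 1 hX jHerm_one, jinner_one_right]

namespace IsHermLinear

lemma map_jcross_sub_jcross (hα : IsHermLinear α) (hinner : PreservesJInner α) (h1 : α 1 = 1)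
    {X Y : JMat} (hX : JHerm X) (hY : JHerm Y) :
    α (jcross X Y) - jcross (α X) (α Y) = α (jmul X Y) - jmul (α X) (α Y) := by
  have hXY : JHerm (jtr X • Y + jtr Y • X) := (hY.smul _).add (hX.smul _)
  rw [jcross, jcross, hα.map_add _ _ ((hX.jmul hY).sub (hXY.smul _)) (jHerm_one.smul _),
    hα.map_sub (hX.jmul hY) (hXY.smul _), hα.map_smul _ _ hXY, hα.map_smul _ _ jHerm_one,
    hα.map_add _ _ (hY.smul _) (hX.smul _), hα.map_smul _ _ hY, hα.map_smul _ _ hX, h1,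
    jtr_map_of_preservesJInner hinner h1 hX, jtr_map_of_preservesJInner hinner h1 hY,
    hinner X Y hX hY]
  abel

lemma preservesJMul_iff_preservesJCross (hα : IsHermLinear α) (hinner : PreservesJInner α)
    (h1 : α 1 = 1) : PreservesJMul α ↔ PreservesJCross α :=
  forall₄_congr fun _ _ hX hY => by
    rw [← sub_eq_zero, ← hα.map_jcross_sub_jcross hinner h1 hX hY, sub_eq_zero]

end IsHermLinear

lemma map_one_of_preservesJMul (hsurj : Set.SurjOn α {X | JHerm X} {X | JHerm X})
    (hm : PreservesJMul α) : α 1 = 1 := by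
  obtain ⟨X, hX, hX1⟩ := hsurj jHerm_one
  have h := hm X 1 hX jHerm_one
  rwa [jmul_one_right, hX1, jmul_one_left, eq_comm] at h

lemma jtr_map_jmul_assoc (hm : PreservesJMul α) {X Y Z : JMat} (hX : JHerm X) (hY : JHerm Y)
    (hZ : JHerm Z) : jtr (α (jmul (jmul X Y) Z)) = jtr (α (jmul X (jmul Y Z))) := by
  rw [hm _ _ (hX.jmul hY) hZ, hm _ _ hX hY, hm _ _ hX (hY.jmul hZ), hm _ _ hY hZ]
  exact jinner_jmul_assoc _ _ _

namespace IsHermLinear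

lemma jtr_map_jF (hα : IsHermLinear α) (hm : PreservesJMul α) {p q : Fin 3} (hpq : p ≠ q)
    (x : Octonion) : jtr (α (jF p q x)) = 0 := by
  have hF := jHerm_jF hpq x
  have h := jtr_map_jmul_assoc hm (jHerm_jE p) (jHerm_jE p) hF
  rw [jmul_jE_self, jmul_jE_jF hpq, jmul_smul_right, jmul_jE_jF hpq, hα.map_smul _ _ hF,
    hα.map_smul _ _ (hF.smul _), hα.map_smul _ _ hF, jtr_smul, jtr_smul, jtr_smul] at h
  linarith

lemma jtr_map_jE_eq (hα : IsHermLinear α) (hm : PreservesJMul α) {p q : Fin 3} (hpq : p ≠ q) :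
    jtr (α (jE p)) = jtr (α (jE q)) := by
  have hF := jHerm_jF hpq 1
  have h := jtr_map_jmul_assoc hm hF hF (jHerm_jE p)
  rw [jmul_jF_self hpq, oinner_one, one_smul, jmul_add_left, jmul_jE_self, jmul_jE_jE hpq.symm,
    add_zero, jmul_comm (jF p q 1) (jE p), jmul_jE_jF hpq, jmul_smul_right, jmul_jF_self hpq,
    oinner_one, one_smul, hα.map_smul _ _ ((jHerm_jE p).add (jHerm_jE q)),
    hα.map_add _ _ (jHerm_jE p) (jHerm_jE q), jtr_smul, jtr_add] at h
  linarith

lemma jtr_map_eq_of_jE_jF (hα : IsHermLinear α) (hE : ∀ i, jtr (α (jE i)) = 1)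
    (hF : ∀ p q, p ≠ q → ∀ x, jtr (α (jF p q x)) = 0) {X : JMat} (hX : JHerm X) :
    jtr (α X) = jtr X := by
  have hE' := fun i (r : ℝ) => (jHerm_jE i).smul r
  have hF' := fun {p q : Fin 3} (h : p ≠ q) (x : Octonion) => jHerm_jF h x
  nth_rw 1 [eq_jE_add_jF hX]
  rw [hα.map_add _ _ (((hE' 0 _).add (hE' 1 _)).add (hE' 2 _))
      (((hF' (by decide) _).add (hF' (by decide) _)).add (hF' (by decide) _)),
    hα.map_add₃ (hE' 0 _) (hE' 1 _) (hE' 2 _),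
    hα.map_add₃ (hF' (by decide) _) (hF' (by decide) _) (hF' (by decide) _),
    hα.map_smul _ _ (jHerm_jE 0), hα.map_smul _ _ (jHerm_jE 1), hα.map_smul _ _ (jHerm_jE 2)]
  simp only [jtr_add, jtr_smul, hE, hF _ _ (by decide : (0 : Fin 3) ≠ 1),
    hF _ _ (by decide : (0 : Fin 3) ≠ 2), hF _ _ (by decide : (1 : Fin 3) ≠ 2)]
  rw [jtr]
  ring

lemma jtr_map_of_preservesJMul (hα : IsHermLinear α) (hm : PreservesJMul α) (h1 : α 1 = 1)
    {X : JMat} (hX : JHerm X) : jtr (α X) = jtr X := by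
  have hsum : jtr (α (jE 0)) + jtr (α (jE 1)) + jtr (α (jE 2)) = 3 := by
    rw [← jtr_add, ← jtr_add, ← hα.map_add₃ (jHerm_jE 0) (jHerm_jE 1) (jHerm_jE 2),
      ← one_eq_jE_add, h1, jtr_one]
  have h01 := hα.jtr_map_jE_eq hm (by decide : (0 : Fin 3) ≠ 1)
  have h02 := hα.jtr_map_jE_eq hm (by decide : (0 : Fin 3) ≠ 2)
  refine hα.jtr_map_eq_of_jE_jF (fun i => ?_) (fun p q h x => hα.jtr_map_jF hm h x) hX
  fin_cases i <;> simp only [Fin.zero_eta, Fin.mk_one, Fin.reduceFinMk] <;> linarith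

lemma preservesJInner_of_preservesJMul (hα : IsHermLinear α) (hm : PreservesJMul α)
    (h1 : α 1 = 1) : PreservesJInner α := fun X Y hX hY => by
  rw [jinner, ← hm X Y hX hY, hα.jtr_map_of_preservesJMul hm h1 (hX.jmul hY), jinner]

end IsHermLinear

lemma exists_one_eq_jE_add (k : Fin 3) : ∃ p q, p ≠ q ∧ (1 : JMat) = jE p + jE q + jE k := by
  match k with
  | 0 => exact ⟨1, 2, by decide, by rw [one_eq_jE_add]; abel⟩
  | 1 => exact ⟨0, 2, by decide, by rw [one_eq_jE_add]; abel⟩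
  | 2 => exact ⟨0, 1, by decide, one_eq_jE_add⟩

/-- On `X = Y = F_{pq}(x)` the identity says that `n (C, F_{pq}(x))²` is a multiple of `|x|²`;
that multiple has to vanish. -/
lemma jinner_jE_eq_one_of_jcross {C : JMat} {n : ℝ}
    (h : ∀ X Y, JHerm X → JHerm Y →
      6 * jinner C (jcross X Y) = n * jinner C X * jinner C Y - 3 * jinner X Y)
    (k : Fin 3) : jinner C (jE k) = 1 := by
  obtain ⟨p, q, hpq, hsum⟩ := exists_one_eq_jE_add k
  have hsq : ∀ x, n * jinner C (jF p q x) ^ 2 = 6 * (1 - jinner C (jE k)) * oinner x x := by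
    intro x
    have hx := h _ _ (jHerm_jF hpq x) (jHerm_jF hpq x)
    rw [jcross_jF_self hpq hsum, jinner_smul_right, jinner_jF_self hpq] at hx
    linear_combination -hx
  have := eq_zero_of_mul_sq_eq_smul_oinner
    (fun x y => by rw [jF_add, jinner_add_right]) hsq
  linarith

lemma eq_three_of_jcross {C : JMat} {n : ℝ}
    (h : ∀ X Y, JHerm X → JHerm Y →
      6 * jinner C (jcross X Y) = n * jinner C X * jinner C Y - 3 * jinner X Y) : n = 3 := by
  have h0 := h _ _ (jHerm_jE 0) (jHerm_jE 0)
  rw [jcross_jE_self, jinner_zero_right, jinner_jE_eq_one_of_jcross h, jinner_jE_self] at h0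
  linarith

lemma eq_one_of_jinner_jE {C : JMat} (hC : JHerm C) (hCC : jinner C C = 3)
    (hdiag : ∀ k, jinner C (jE k) = 1) : C = 1 := by
  have htr : jtr C = 3 := by
    rw [jtr_eq_sum_jinner_jE, hdiag, hdiag, hdiag]; norm_num
  refine sub_eq_zero.1 (eq_zero_of_jinner_self_eq_zero (hC.sub jHerm_one) ?_)
  rw [jinner_sub_left, jinner_sub_right, jinner_sub_right, jinner_one_right, jinner_one_left,
    jinner_one_right, jtr_one, hCC, htr]
  norm_num

namespace IsHermLinear

lemma jcross_map_one (hα : IsHermLinear α) (hc : PreservesJCross α) {X : JMat} (hX : JHerm X) :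
    jcross (α 1) (α X) = (-2⁻¹ : ℝ) • α X + (2⁻¹ * jtr X) • α 1 := by
  rw [← hc 1 X jHerm_one hX, jcross_one_left, hα.map_add _ _ (hX.smul _) (jHerm_one.smul _),
    hα.map_smul _ _ hX, hα.map_smul _ _ jHerm_one]

lemma jinner_map_one (hα : IsHermLinear α) (hc : PreservesJCross α) {X : JMat} (hX : JHerm X) :
    3 * jinner (α 1) (α X) = jinner (α 1) (α 1) * jtr X := by
  have hBB : jcross (α 1) (α 1) = α 1 := by
    rw [← hc 1 1 jHerm_one jHerm_one, jcross_one_left, jtr_one]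
    congr 1
    module
  have hsym : jtri (α 1) (α 1) (α X) = jtri (α X) (α 1) (α 1) := by
    rw [jtri_comm13, jtri_comm23]
  rw [jtri, jtri, hBB, hα.jcross_map_one hc hX, jinner_add_right, jinner_smul_right,
    jinner_smul_right, jinner_comm (α X)] at hsym
  linarith

lemma jinner_map_map (hα : IsHermLinear α) (hc : PreservesJCross α) {X Y : JMat} (hX : JHerm X)
    (hY : JHerm Y) : 3 * jinner (α X) (α Y) = jinner (α 1) (α 1) * jinner X Y := by
  have hsym : jtri (α Y) (α 1) (α X) = jtri (α 1) (α X) (α Y) := by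
    rw [jtri_comm12, jtri_comm23]
  rw [jtri, jtri, ← hc X Y hX hY, hα.jcross_map_one hc hX, jinner_add_right, jinner_smul_right,
    jinner_smul_right, jinner_comm (α Y) (α 1), jinner_comm (α Y) (α X)] at hsym
  have hXY := hα.jinner_map_one hc (hX.jcross hY)
  have hY' := hα.jinner_map_one hc hY
  rw [jtr_jcross] at hXY
  linear_combination (-6) * hsym - 2 * hXY + jtr X * hY'

lemma preservesJInner_and_map_one_of_preservesJCross (hα : IsHermLinear α)
    (hsurj : Set.SurjOn α {X | JHerm X} {X | JHerm X}) (hc : PreservesJCross α) :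
    PreservesJInner α ∧ α 1 = 1 := by
  obtain ⟨C, hC, hC1⟩ := hsurj jHerm_one
  set n := jinner (α 1) (α 1)
  have htr : ∀ X, JHerm X → 3 * jtr (α X) = n * jinner C X := fun X hX => by
    have h := hα.jinner_map_map hc hC hX
    rwa [hC1, jinner_one_left] at h
  have hCC : n * jinner C C = 9 := by
    have h := htr C hC
    rw [hC1, jtr_one] at h
    linarith
  have hn : n ≠ 0 := by
    rintro hn0
    rw [hn0, zero_mul] at hCC
    norm_num at hCC
  have hid : ∀ X Y, JHerm X → JHerm Y →
      6 * jinner C (jcross X Y) = n * jinner C X * jinner C Y - 3 * jinner X Y := by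
    intro X Y hX hY
    have hXY : jtr (α (jcross X Y)) = 2⁻¹ * (jtr (α X) * jtr (α Y) - jinner (α X) (α Y)) := by
      rw [hc X Y hX hY, jtr_jcross]
    refine mul_left_cancel₀ hn ?_
    linear_combination (-6) * htr _ (hX.jcross hY) + 18 * hXY + (3 * jtr (α Y)) * htr X hX
      + (n * jinner C X) * htr Y hY - 3 * hα.jinner_map_map hc hX hY
  have hn3 : n = 3 := eq_three_of_jcross hid
  have hC1' : C = 1 := eq_one_of_jinner_jE hC (by rw [hn3] at hCC; linarith)
    (jinner_jE_eq_one_of_jcross hid)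
  refine ⟨fun X Y hX hY => ?_, hC1' ▸ hC1⟩
  have h : 3 * jinner (α X) (α Y) = n * jinner X Y := hα.jinner_map_map hc hX hY
  rw [hn3] at h
  linarith

end IsHermLinear

end

/-- For an `ℝ`-linear bijection `α` of the exceptional Jordan
algebra `𝔍`, the following are equivalent:
(1) `α` preserves the Jordan product;
(2) `α` preserves `det` and the inner product;
(3) `α` preserves `det` and fixes `E = 1`;
(4) `α` preserves the Freudenthal cross product. -/
theorem jordan_aut_characterizations (α : JMat → JMat)
    (hbij : Set.BijOn α {X | JHerm X} {X | JHerm X})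
    (hadd : ∀ X Y, JHerm X → JHerm Y → α (X + Y) = α X + α Y)
    (hsmul : ∀ (r : ℝ) (X : JMat), JHerm X → α (r • X) = r • α X) :
    List.TFAE
      [∀ X Y, JHerm X → JHerm Y → α (jmul X Y) = jmul (α X) (α Y),
       (∀ X, JHerm X → jdet (α X) = jdet X) ∧
         (∀ X Y, JHerm X → JHerm Y → jinner (α X) (α Y) = jinner X Y),
       (∀ X, JHerm X → jdet (α X) = jdet X) ∧ α 1 = 1,
       ∀ X Y, JHerm X → JHerm Y → α (jcross X Y) = jcross (α X) (α Y)] := by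
  have hα : IsHermLinear α := ⟨hadd, hsmul⟩
  tfae_have 1 → 4 := fun hm => by
    have h1 := map_one_of_preservesJMul hbij.surjOn hm
    have hinner := hα.preservesJInner_of_preservesJMul hm h1
    exact (hα.preservesJMul_iff_preservesJCross hinner h1).1 hm
  tfae_have 4 → 1 := fun hc => by
    obtain ⟨hinner, h1⟩ := hα.preservesJInner_and_map_one_of_preservesJCross hbij.surjOn hc
    exact (hα.preservesJMul_iff_preservesJCross hinner h1).2 hc
  tfae_have 4 → 3 := fun hc => by
    obtain ⟨hinner, h1⟩ := hα.preservesJInner_and_map_one_of_preservesJCross hbij.surjOn hc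
    exact ⟨preservesJDet_of_preservesJInner_of_preservesJCross hinner hc, h1⟩
  tfae_have 3 → 2 := fun ⟨hdet, h1⟩ =>
    ⟨hdet, preservesJInner_of_preservesJTri (hα.preservesJTri_of_preservesJDet hdet) h1⟩
  tfae_have 2 → 4 := fun ⟨hdet, hinner⟩ =>
    preservesJCross_of_preservesJTri hbij.mapsTo hbij.surjOn hinner
      (hα.preservesJTri_of_preservesJDet hdet)
  tfae_finish
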